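/- arXiv:1805.06765 — 3 statements merged into one kernel-verified Lean document; each statement's English description precedes it below -/
import Mathlib

section
/- For all integers n, h, k: P(n+h)·Q(n+k) − P(n)·Q(n+h+k) = (−1)^n · P(h)·Q(k), where (−1)^n denotes the integer power (−1)^n extended to integer exponents (equal to 1 for even n and −1 for odd n). -/
/-!
This is Vajda's identity `f(n+h)g(n+k) - f(n)g(n+h+k) = (-1)^n (f(h)g(k) - f(0)g(h+k))`, valid for
any two solutions `f, g` of `x(m+2) = a x(m+1) + x(m)`; with `f = P` the term `f(0)` vanishes.
For fixed `n, k` both sides solve the recurrence in `h`, so it suffices to compare them at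
`h = 0`, where both vanish, and at `h = 1`. There the identity says that the Casoratian of `f`
and `g(· + k)` at `n` is `(-1)^n` times its value at `0`: since the coefficient of `x(m)` is `1`,
the Casoratian changes sign at every step.
-/

variable {R : Type*} [CommRing R]

def SolvesRec (a : R) (f : ℤ → R) : Prop :=
  ∀ m : ℤ, f (m + 2) = a * f (m + 1) + f m

namespace SolvesRec

variable {a : R} {f g : ℤ → R}

theorem of_sub (hf : ∀ m : ℤ, f m = a * f (m - 1) + f (m - 2)) : SolvesRec a f := by
  intro m
  simpa only [show m + 2 - 1 = m + 1 by ring, add_sub_cancel_right] using hf (m + 2)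

theorem comp_add_const (hf : SolvesRec a f) (c : ℤ) : SolvesRec a (fun m => f (m + c)) := by
  intro m
  simpa only [add_right_comm _ c] using hf (m + c)

theorem mul_sub_mul (hf : SolvesRec a f) (hg : SolvesRec a g) (u v : R) :
    SolvesRec a (fun m => u * f m - v * g m) := by
  intro m
  simp only [hf m, hg m]
  ring

theorem eq_of_apply_zero_of_apply_one (hf : SolvesRec a f) (hg : SolvesRec a g) (h0 : f 0 = g 0) (h1 : f 1 = g 1) :
    f = g := by
  suffices key : ∀ m : ℤ, f m = g m ∧ f (m + 1) = g (m + 1) from funext fun m => (key m).1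
  intro m
  induction m using Int.induction_on with
  | zero => exact ⟨h0, by simpa using h1⟩
  | succ i ih =>
    refine ⟨ih.2, ?_⟩
    rw [add_assoc, one_add_one_eq_two, hf, hg, ih.1, ih.2]
  | pred i ih =>
    refine ⟨?_, by simpa using ih.1⟩
    have hfi := hf (-i - 1)
    have hgi := hg (-i - 1)
    rw [show -(i : ℤ) - 1 + 2 = -i + 1 by ring, sub_add_cancel] at hfi hgi
    linear_combination hgi - hfi + ih.2 - a * ih.1

end SolvesRec

def casoratian (f g : ℤ → R) (m : ℤ) : R :=
  f (m + 1) * g m - f m * g (m + 1)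

variable {a : R} {f g : ℤ → R}

theorem casoratian_add_one (hf : SolvesRec a f) (hg : SolvesRec a g) (m : ℤ) :
    casoratian f g (m + 1) = -casoratian f g m := by
  simp only [casoratian, add_assoc, one_add_one_eq_two, hf m, hg m]
  ring

theorem casoratian_eq_negOnePow_smul (hf : SolvesRec a f) (hg : SolvesRec a g) (m : ℤ) :
    casoratian f g m = (m.negOnePow : ℤ) • casoratian f g 0 := by
  induction m using Int.induction_on with
  | zero => simp
  | succ i ih => rw [casoratian_add_one hf hg, ih, Int.negOnePow_succ]; simp
  | pred i ih =>
    have sign := Int.negOnePow_succ (-i - 1)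
    have step := casoratian_add_one hf hg (-i - 1)
    rw [sub_add_cancel] at sign step
    rw [step, sign, Units.val_neg, neg_smul, neg_inj] at ih
    exact ih

theorem SolvesRec.vajda (hf : SolvesRec a f) (hg : SolvesRec a g) (n h k : ℤ) :
    f (n + h) * g (n + k) - f n * g (n + h + k)
      = (n.negOnePow : ℤ) • (f h * g k - f 0 * g (h + k)) := by
  suffices key : (fun j => f (n + j) * g (n + k) - f n * g (n + j + k))
      = fun j => (n.negOnePow : ℤ) • g k * f j - (n.negOnePow : ℤ) • f 0 * g (j + k) by
    rw [congrFun key h, smul_sub, smul_mul_assoc, smul_mul_assoc, mul_comm (g k)]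
  refine SolvesRec.eq_of_apply_zero_of_apply_one ?_ ((hf.mul_sub_mul (hg.comp_add_const k)) _ _) ?_ ?_
  · convert (hf.comp_add_const n).mul_sub_mul (hg.comp_add_const (n + k)) (g (n + k)) (f n)
      using 2 with m
    ring_nf
  · simp only [add_zero, sub_self, zero_add, smul_mul_assoc, mul_comm (g k)]
  · have step := casoratian_eq_negOnePow_smul hf (hg.comp_add_const k) n
    simp only [casoratian, zero_add] at step
    rw [step, smul_sub, smul_mul_assoc, smul_mul_assoc, mul_comm (g k)]

theorem stmt_12_general (P Q : ℤ → ℤ)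
    (hP0 : P 0 = 0)
    (hP : ∀ n : ℤ, P n = 2 * P (n - 1) + P (n - 2))
    (hQ : ∀ n : ℤ, Q n = 2 * Q (n - 1) + Q (n - 2))
    (n h k : ℤ) :
    P (n + h) * Q (n + k) - P n * Q (n + h + k)
      = (n.negOnePow : ℤ) * P h * Q k := by
  rw [(SolvesRec.of_sub hP).vajda (SolvesRec.of_sub hQ), hP0, smul_eq_mul]
  ring

/-- `P(n+h)·Q(n+k) − P(n)·Q(n+h+k) = (−1)^n·P(h)·Q(k)` for Pell `P` and
Pell–Lucas `Q` extended to all integers. -/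
theorem stmt_12 (P Q : ℤ → ℤ)
    (hP0 : P 0 = 0) (hP1 : P 1 = 1)
    (hP : ∀ n : ℤ, P n = 2 * P (n - 1) + P (n - 2))
    (hQ0 : Q 0 = 2) (hQ1 : Q 1 = 1)
    (hQ : ∀ n : ℤ, Q n = 2 * Q (n - 1) + Q (n - 2))
    (n h k : ℤ) :
    P (n + h) * Q (n + k) - P n * Q (n + h + k)
      = (n.negOnePow : ℤ) * P h * Q k :=
  stmt_12_general P Q hP0 hP hQ n h k
end

section
/- Catalan's identity for Pell numbers: for all integers d, a: P(d)² − P(d−a)·P(d+a) = (−1)^(d−a) · P(a)², where (−1)^(d−a) denotes the integer power (−1)^(d−a) extended to integer exponents. -/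
/-!
In `ℤ√2` the unit `u = 1 + √2` has norm `-1`, and `P n` is the `√2`-coordinate of `u ^ n`:
both sides satisfy the Pell recurrence with the same two initial values. For any `x y : ℤ√D`
one has the polynomial identity `im (x y) ^ 2 - im x * im (x y²) = norm x * im y ^ 2`; taking
`x = u ^ (d - a)` and `y = u ^ a` gives Catalan's identity, the sign being `norm (u ^ (d - a))`.
-/

theorem Zsqrtd.im_mul_sq_sub_im_mul_im_mul_sq {D : ℤ} (x y : ℤ√D) :
    (x * y).im ^ 2 - x.im * (x * y ^ 2).im = x.norm * y.im ^ 2 := by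
  simp only [sq, Zsqrtd.im_mul, Zsqrtd.re_mul, Zsqrtd.norm_def]
  ring

theorem eq_of_linearRecurrence {R : Type*} [Ring R] (p : R) {f g : ℤ → R}
    (hf : ∀ n, f (n + 2) = p * f (n + 1) + f n) (hg : ∀ n, g (n + 2) = p * g (n + 1) + g n)
    (h0 : f 0 = g 0) (h1 : f 1 = g 1) : f = g := by
  suffices h : ∀ n : ℤ, f n = g n ∧ f (n + 1) = g (n + 1) from funext fun n => (h n).1
  intro n
  induction n using Int.induction_on with
  | zero => exact ⟨h0, by simpa using h1⟩
  | succ k ih =>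
    refine ⟨ih.2, ?_⟩
    rw [add_assoc, one_add_one_eq_two, hf, hg, ih.1, ih.2]
  | pred k ih =>
    refine ⟨?_, by simpa using ih.1⟩
    have hfk := hf (-k - 1)
    have hgk := hg (-k - 1)
    rw [show -(k : ℤ) - 1 + 2 = -k + 1 by ring, show -(k : ℤ) - 1 + 1 = -k by ring] at hfk hgk
    rw [eq_sub_of_add_eq' hfk.symm, eq_sub_of_add_eq' hgk.symm, ih.1, ih.2]

def silverUnit : (ℤ√2)ˣ where
  val := ⟨1, 1⟩
  inv := ⟨-1, 1⟩
  val_inv := by ext <;> simp [Zsqrtd.re_mul, Zsqrtd.im_mul]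
  inv_val := by ext <;> simp [Zsqrtd.re_mul, Zsqrtd.im_mul]

theorem silverUnit_sq : (silverUnit : ℤ√2) ^ 2 = 2 * silverUnit + 1 := by
  ext <;> simp [silverUnit, sq, Zsqrtd.re_mul, Zsqrtd.im_mul]

theorem im_silverUnit_zpow_add_two (n : ℤ) :
    ((silverUnit ^ (n + 2) : (ℤ√2)ˣ) : ℤ√2).im
      = 2 * ((silverUnit ^ (n + 1) : (ℤ√2)ˣ) : ℤ√2).im + ((silverUnit ^ n : (ℤ√2)ˣ) : ℤ√2).im := by
  have h : ((silverUnit ^ (n + 2) : (ℤ√2)ˣ) : ℤ√2)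
      = 2 * ((silverUnit ^ (n + 1) : (ℤ√2)ˣ) : ℤ√2) + ((silverUnit ^ n : (ℤ√2)ˣ) : ℤ√2) := by
    rw [zpow_add, zpow_add, zpow_one, Units.val_mul, Units.val_mul, zpow_two, Units.val_mul,
      ← sq, silverUnit_sq]
    ring
  rw [h, Zsqrtd.im_add, Zsqrtd.im_mul]
  simp

theorem norm_silverUnit_zpow (n : ℤ) :
    ((silverUnit ^ n : (ℤ√2)ˣ) : ℤ√2).norm = (n.negOnePow : ℤ) := by
  have hu : Units.map (Zsqrtd.normMonoidHom (d := 2)) silverUnit = -1 := by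
    ext
    simp [Zsqrtd.normMonoidHom, Zsqrtd.norm, silverUnit]
  have h := congrArg Units.val (map_zpow (Units.map (Zsqrtd.normMonoidHom (d := 2))) silverUnit n)
  rwa [hu, ← Int.negOnePow_def] at h

/-- Catalan's identity for Pell numbers extended to all integers. -/
theorem stmt_15 (P : ℤ → ℤ)
    (hP0 : P 0 = 0) (hP1 : P 1 = 1)
    (hP : ∀ n : ℤ, P n = 2 * P (n - 1) + P (n - 2))
    (d a : ℤ) :
    P d ^ 2 - P (d - a) * P (d + a) = ((d - a).negOnePow : ℤ) * P a ^ 2 := by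
  have hP_eq : P = fun n => ((silverUnit ^ n : (ℤ√2)ˣ) : ℤ√2).im := by
    refine eq_of_linearRecurrence 2 (fun n => ?_) im_silverUnit_zpow_add_two ?_ ?_
    · have h := hP (n + 2)
      rwa [show n + 2 - 1 = n + 1 by ring, show n + 2 - 2 = n by ring] at h
    · simpa using hP0
    · simpa [silverUnit] using hP1
  have hd : silverUnit ^ d = silverUnit ^ (d - a) * silverUnit ^ a := by
    rw [← zpow_add, sub_add_cancel]
  have hda : silverUnit ^ (d + a) = silverUnit ^ (d - a) * (silverUnit ^ a) ^ 2 := by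
    rw [← zpow_natCast, ← zpow_mul, ← zpow_add]
    ring_nf
  subst hP_eq
  simp only [hd, hda, Units.val_mul, Units.val_pow_eq_pow_val]
  rw [Zsqrtd.im_mul_sq_sub_im_mul_im_mul_sq, norm_silverUnit_zpow]
end

section
/- For all integers u, v, w with u + v = w: (−1)^u·2^v·j(u)² + (−1)^v·2^u·j(v)² + (−1)^w·j(w)² = (−1)^w·j(u)·j(v)·j(w) + 2^(w+2), where (−1)^n and 2^n denote powers in ℚ with integer exponent n. -/
/-!
Both sides are determined by the closed form `j n = 2 ^ n + (-1) ^ n`, which holds on all of `ℤ`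
because a two-term recurrence with invertible last coefficient propagates in both directions.
Writing `A = 2 ^ u`, `B = 2 ^ v`, `X = (-1) ^ u`, `Y = (-1) ^ v`, the claim becomes a polynomial
identity in `A, B, X, Y` that holds modulo `X ^ 2 = 1` and `Y ^ 2 = 1`.
-/

section Recurrence

variable {R : Type*} [CommRing R] [IsDomain R] {a b : R}

theorem eq_of_linear_recurrence {f g : ℤ → R} (hb : b ≠ 0)
    (hf : ∀ n, f (n + 2) = a * f (n + 1) + b * f n)
    (hg : ∀ n, g (n + 2) = a * g (n + 1) + b * g n)
    (h0 : f 0 = g 0) (h1 : f 1 = g 1) : f = g := by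
  suffices h : ∀ n, f n = g n ∧ f (n + 1) = g (n + 1) from funext fun n => (h n).1
  intro n
  induction n using Int.induction_on with
  | zero => exact ⟨h0, by simpa using h1⟩
  | succ k ih =>
    refine ⟨ih.2, ?_⟩
    rw [add_assoc, one_add_one_eq_two, hf, hg, ih.1, ih.2]
  | pred k ih =>
    refine ⟨?_, by simpa using ih.1⟩
    have hfk := hf (-k - 1)
    have hgk := hg (-k - 1)
    rw [show -(k : ℤ) - 1 + 2 = -k + 1 by ring, show -(k : ℤ) - 1 + 1 = -k by ring] at hfk hgk
    apply mul_left_cancel₀ hb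
    linear_combination ih.2 - a * ih.1 - hfk + hgk

end Recurrence

theorem zpow_add_two_of_sq_eq {K : Type*} [Field K] {a b x : K} (hx : x ≠ 0)
    (hsq : x ^ 2 = a * x + b) (n : ℤ) : x ^ (n + 2) = a * x ^ (n + 1) + b * x ^ n := by
  rw [zpow_add₀ hx, zpow_add₀ hx, zpow_ofNat, hsq, zpow_one]
  ring

theorem jacobsthalLucas_eq_two_zpow_add_neg_one_zpow {K : Type*} [Field K] (h2 : (2 : K) ≠ 0)
    {j : ℤ → K} (hj0 : j 0 = 2) (hj1 : j 1 = 1) (hj : ∀ n, j (n + 2) = j (n + 1) + 2 * j n)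
    (n : ℤ) : j n = 2 ^ n + (-1) ^ n := by
  have h1 : (-1 : K) ≠ 0 := neg_ne_zero.2 one_ne_zero
  have hpow (m : ℤ) : (2 : K) ^ (m + 2) + (-1) ^ (m + 2)
      = 1 * (2 ^ (m + 1) + (-1) ^ (m + 1)) + 2 * (2 ^ m + (-1) ^ m) := by
    linear_combination zpow_add_two_of_sq_eq (a := 1) (b := 2) h2 (by norm_num) m
      + zpow_add_two_of_sq_eq (a := 1) (b := 2) h1 (by norm_num) m
  have hj' (m : ℤ) : j (m + 2) = 1 * j (m + 1) + 2 * j m := by rw [one_mul, hj]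
  refine congrFun (eq_of_linear_recurrence (g := fun m => 2 ^ m + (-1) ^ m) h2 hj' hpow ?_ ?_) n
  · rw [hj0]; norm_num
  · rw [hj1]; norm_num

theorem three_square_identity_of_sq_eq_one {R : Type*} [CommRing R] {A B X Y : R}
    (hX : X ^ 2 = 1) (hY : Y ^ 2 = 1) :
    X * B * (A + X) ^ 2 + Y * A * (B + Y) ^ 2 + X * Y * (A * B + X * Y) ^ 2
      = X * Y * (A + X) * (B + Y) * (A * B + X * Y) + 4 * A * B := by
  linear_combination (2 * A * B - A * B ^ 2 * Y - A * Y ^ 3) * hX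
    + (2 * A * B - A ^ 2 * B * X - B * X ^ 3) * hY

/-- Three-square identity for Jacobsthal–Lucas numbers extended to all
integers. -/
theorem stmt_17 (j : ℤ → ℚ)
    (hj0 : j 0 = 2) (hj1 : j 1 = 1)
    (hj : ∀ n : ℤ, j n = j (n - 1) + 2 * j (n - 2))
    (u v w : ℤ) (huvw : u + v = w) :
    (-1 : ℚ) ^ u * (2 : ℚ) ^ v * j u ^ 2 + (-1 : ℚ) ^ v * (2 : ℚ) ^ u * j v ^ 2
        + (-1 : ℚ) ^ w * j w ^ 2
      = (-1 : ℚ) ^ w * j u * j v * j w + (2 : ℚ) ^ (w + 2) := by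
  have hrec (n : ℤ) : j (n + 2) = j (n + 1) + 2 * j n := by
    simpa [show n + 2 - 1 = n + 1 by ring] using hj (n + 2)
  have hsq (n : ℤ) : ((-1 : ℚ) ^ n) ^ 2 = 1 := by
    rw [← zpow_natCast, ← zpow_mul, mul_comm, zpow_mul]; norm_num
  subst huvw
  simp only [jacobsthalLucas_eq_two_zpow_add_neg_one_zpow two_ne_zero hj0 hj1 hrec,
    zpow_add₀ (two_ne_zero' ℚ), zpow_add₀ (neg_ne_zero.2 (one_ne_zero' ℚ))]
  linear_combination
    three_square_identity_of_sq_eq_one (A := (2 : ℚ) ^ u) (B := (2 : ℚ) ^ v) (hsq u) (hsq v)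
end
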